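/- arXiv:1303.1551 — 2 statements merged into one kernel-verified Lean document; each statement's English description precedes it below -/
import Mathlib

section
/- Let T be a finite tree with |V(T)| ≥ 2 and radius r(T). If u and v are distinct centers of T, then every path in T of length r(T) starting at u contains v, and every path in T of length r(T) starting at v contains u. -/
open SimpleGraph

/-!
Two distinct centers `u`, `v` of a tree are adjacent: otherwise the neighbour `m` of `u` on the
`u`–`v` path lies, for every vertex `w`, on the geodesic from `u` or from `v` to `w`, and is
strictly closer to `w` than that endpoint, so `m` would have smaller eccentricity than the
centers. Once `u` and `v` are adjacent, a path of length `r(T)` from `u` avoiding `v` extends by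
the edge `vu` to a path, hence a geodesic, of length `r(T) + 1` from `v`, which is impossible.
-/

/-- `eccent G v` is `d_T(v)`: the maximum over `u ∈ V \ {v}` of `dist(v, u)`. -/
noncomputable def eccent {V : Type*} [Fintype V] [DecidableEq V]
    (G : SimpleGraph V) (v : V) : ℕ :=
  (Finset.univ.erase v).sup (fun u => G.dist v u)

/-- `v` is a center of `G` if it minimizes the eccentricity `d_T`. -/
def IsCenter {V : Type*} [Fintype V] [DecidableEq V] (G : SimpleGraph V) (v : V) : Prop :=
  ∀ u : V, _root_.eccent G v ≤ _root_.eccent G u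

section Eccentricity

variable {V : Type*} [Fintype V] [DecidableEq V]

lemma dist_le_eccent (G : SimpleGraph V) (v w : V) : G.dist v w ≤ _root_.eccent G v := by
  obtain rfl | hwv := eq_or_ne w v
  · simp
  · exact Finset.le_sup (f := G.dist v) (Finset.mem_erase.2 ⟨hwv, Finset.mem_univ w⟩)

lemma eccent_le_of_forall_dist_le {G : SimpleGraph V} {v : V} {k : ℕ}
    (h : ∀ w, G.dist v w ≤ k) : _root_.eccent G v ≤ k :=
  Finset.sup_le fun w _ => h w

end Eccentricity

namespace SimpleGraph

variable {V : Type*} {G : SimpleGraph V}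

lemma IsAcyclic.length_eq_dist_of_isPath (hG : G.IsAcyclic) {a b : V} {p : G.Walk a b}
    (hp : p.IsPath) : p.length = G.dist a b := by
  obtain ⟨q, hq, hql⟩ := p.reachable.exists_path_of_dist
  have hpq : p = q := congrArg Subtype.val ((hG.subsingleton_path a b).elim ⟨p, hp⟩ ⟨q, hq⟩)
  rw [hpq, hql]

lemma IsAcyclic.dist_add_dist_of_mem_support [DecidableEq V] (hG : G.IsAcyclic) {a b m : V}
    {p : G.Walk a b} (hp : p.IsPath) (hm : m ∈ p.support) :
    G.dist a m + G.dist m b = G.dist a b := by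
  have hlen := congrArg Walk.length (p.take_spec hm)
  rw [Walk.length_append, hG.length_eq_dist_of_isPath (hp.takeUntil hm),
    hG.length_eq_dist_of_isPath (hp.dropUntil hm), hG.length_eq_dist_of_isPath hp] at hlen
  exact hlen

lemma IsAcyclic.mem_support_or_mem_support [DecidableEq V] (hG : G.IsAcyclic) {a b w m : V}
    {p : G.Walk a b} (hp : p.IsPath) (hm : m ∈ p.support) (q : G.Walk a w) (s : G.Walk b w) :
    m ∈ q.support ∨ m ∈ s.support := by
  have hpw : p = (q.append s.reverse).bypass :=
    congrArg Subtype.val ((hG.subsingleton_path a b).elim ⟨p, hp⟩ ⟨_, Walk.bypass_isPath _⟩)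
  have hm' := (q.append s.reverse).support_bypass_subset_support (hpw ▸ hm)
  rwa [Walk.mem_support_append_iff, Walk.support_reverse, List.mem_reverse] at hm'

lemma IsTree.dist_add_dist_eq_or [DecidableEq V] (hT : G.IsTree) {a b m : V} {p : G.Walk a b}
    (hp : p.IsPath) (hm : m ∈ p.support) (w : V) :
    G.dist a m + G.dist m w = G.dist a w ∨ G.dist b m + G.dist m w = G.dist b w := by
  obtain ⟨q, hq, -⟩ := hT.connected.exists_path_of_dist a w
  obtain ⟨s, hs, -⟩ := hT.connected.exists_path_of_dist b w
  exact (hT.isAcyclic.mem_support_or_mem_support hp hm q s).imp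
    (hT.isAcyclic.dist_add_dist_of_mem_support hq) (hT.isAcyclic.dist_add_dist_of_mem_support hs)

lemma IsTree.exists_eccent_lt_max [Fintype V] [DecidableEq V] (hT : G.IsTree) {u v : V}
    (h : 2 ≤ G.dist u v) :
    ∃ m, _root_.eccent G m < max (_root_.eccent G u) (_root_.eccent G v) := by
  obtain ⟨p, hp, -⟩ := hT.connected.exists_path_of_dist u v
  have hnil : ¬p.Nil := Walk.not_nil_of_ne fun huv => by simp [huv] at h
  have hm : p.snd ∈ p.support := p.getVert_mem_support 1
  have hum : G.dist u p.snd = 1 := dist_eq_one_iff_adj.2 (p.adj_snd hnil)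
  have hsplit := hT.isAcyclic.dist_add_dist_of_mem_support hp hm
  have hvm : G.dist v p.snd = G.dist p.snd v := dist_comm
  have huv := dist_le_eccent G u v
  have hecc : _root_.eccent G p.snd ≤ max (_root_.eccent G u) (_root_.eccent G v) - 1 := by
    refine eccent_le_of_forall_dist_le fun w => ?_
    have hu := dist_le_eccent G u w
    have hv := dist_le_eccent G v w
    rcases hT.dist_add_dist_eq_or hp hm w with hw | hw <;> omega
  exact ⟨p.snd, by omega⟩

lemma IsTree.adj_of_isCenter [Fintype V] [DecidableEq V] (hT : G.IsTree) {u v : V} (huv : u ≠ v)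
    (hu : IsCenter G u) (hv : IsCenter G v) : G.Adj u v := by
  rw [← dist_eq_one_iff_adj]
  have hpos := hT.connected.pos_dist_of_ne huv
  by_contra hne
  obtain ⟨m, hm⟩ := hT.exists_eccent_lt_max (u := u) (v := v) (by omega)
  have hum := hu m
  have huv := hu v
  have hvu := hv u
  omega

lemma IsAcyclic.mem_support_of_adj_of_length_eq_eccent [Fintype V] [DecidableEq V]
    (hG : G.IsAcyclic) {u v w : V} (hadj : G.Adj u v)
    (hecc : _root_.eccent G v ≤ _root_.eccent G u) {p : G.Walk u w} (hp : p.IsPath)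
    (hl : p.length = _root_.eccent G u) : v ∈ p.support := by
  by_contra hvp
  have hvw := hG.length_eq_dist_of_isPath (hp.cons (h := hadj.symm) hvp)
  have hle := dist_le_eccent G v w
  rw [Walk.length_cons] at hvw
  omega

end SimpleGraph

theorem stmt_4_general {V : Type*} [Fintype V] [DecidableEq V] (G : SimpleGraph V)
    (hT : G.IsTree) (u v : V) (huv : u ≠ v) (hu : IsCenter G u) (hv : IsCenter G v) :
    (∀ (w : V) (p : G.Walk u w), p.IsPath → p.length = _root_.eccent G u → v ∈ p.support) ∧
    (∀ (w : V) (p : G.Walk v w), p.IsPath → p.length = _root_.eccent G v → u ∈ p.support) := by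
  have hadj := hT.adj_of_isCenter huv hu hv
  exact ⟨fun _ _ hp hl => hT.isAcyclic.mem_support_of_adj_of_length_eq_eccent hadj (hv u) hp hl,
    fun _ _ hp hl => hT.isAcyclic.mem_support_of_adj_of_length_eq_eccent hadj.symm (hu v) hp hl⟩

/-- If `u` and `v` are distinct centers of a finite tree with at least two vertices, then
every path of length `r(T)` (the radius, i.e. the eccentricity of a center) starting at `u`
contains `v`, and vice versa. -/
theorem stmt_4 {V : Type*} [Fintype V] [DecidableEq V] (G : SimpleGraph V)
    (hT : G.IsTree) (h2 : 2 ≤ Fintype.card V)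
    (u v : V) (huv : u ≠ v) (hu : IsCenter G u) (hv : IsCenter G v) :
    (∀ (w : V) (p : G.Walk u w), p.IsPath → p.length = _root_.eccent G u → v ∈ p.support) ∧
    (∀ (w : V) (p : G.Walk v w), p.IsPath → p.length = _root_.eccent G v → u ∈ p.support) :=
  stmt_4_general G hT u v huv hu hv
end

section
/- Let T be a finite tree with |V(T)| ≥ 2 and let u be a vertex of T. Then there exists a special leaf with respect to T and u. -/
/-!
Walk greedily away from `u`: at each vertex step into a smallest component of `T \ w` not
containing `u`, until a leaf `l` is reached. For every vertex `w` on the path from `u` to `l`,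
the component of `T \ w` containing `l` is the one chosen at `w`, hence a smallest one. The
walk is formalized as an induction on the size of the current branch.
-/

open SimpleGraph

/-- A leaf of a graph is a vertex of degree one. -/
def IsLeaf {V : Type*} (G : SimpleGraph V) (l : V) : Prop :=
  (G.neighborSet l).ncard = 1

/-- `compOf G v x` is the vertex set of the component of `G \ v` (the graph obtained by
deleting the vertex `v`) containing `x` (for `x ≠ v`): the vertices reachable from `x`
by a walk avoiding `v`. -/
def compOf {V : Type*} (G : SimpleGraph V) (v x : V) : Set V :=
  {y : V | ∃ p : G.Walk x y, v ∉ p.support}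

/-- `l` is a special leaf with respect to `G` and `u`: `l ≠ u` is a leaf, and for every
vertex `w ≠ l` on the path from `u` to `l`, every component of `G \ w` not containing `u`
has at least as many vertices as the component of `G \ w` containing `l`. -/
def IsSpecialLeaf {V : Type*} (G : SimpleGraph V) (u l : V) : Prop :=
  l ≠ u ∧ IsLeaf G l ∧
    ∀ p : G.Walk u l, p.IsPath →
      ∀ w ∈ p.support, w ≠ l →
        ∀ x : V, x ≠ w → u ∉ compOf G w x →
          (compOf G w l).ncard ≤ (compOf G w x).ncard

section compOf

variable {V : Type*} {G : SimpleGraph V} {u v w x y z l : V}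

lemma mem_compOf_self (h : x ≠ v) : x ∈ compOf G v x :=
  ⟨Walk.nil, by simp [Ne.symm h]⟩

lemma notMem_compOf_self : v ∉ compOf G v x :=
  fun ⟨p, hp⟩ => hp p.end_mem_support

lemma compOf_self : compOf G v v = ∅ :=
  Set.eq_empty_of_forall_notMem fun _ ⟨p, hp⟩ => hp p.start_mem_support

lemma mem_compOf_of_mem_support (p : G.Walk x y) (hv : v ∉ p.support) (hw : w ∈ p.support) :
    w ∈ compOf G v x := by
  classical
  exact ⟨p.takeUntil w hw, fun h => hv (p.support_takeUntil_subset_support hw h)⟩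

lemma mem_compOf_symm (h : y ∈ compOf G v x) : x ∈ compOf G v y := by
  obtain ⟨p, hp⟩ := h
  exact ⟨p.reverse, by simpa using hp⟩

lemma mem_compOf_trans (hxy : y ∈ compOf G v x) (hyz : z ∈ compOf G v y) :
    z ∈ compOf G v x := by
  obtain ⟨p, hp⟩ := hxy
  obtain ⟨q, hq⟩ := hyz
  refine ⟨p.append q, fun h => ?_⟩
  rcases List.mem_append.1 (Walk.support_append p q ▸ h) with h | h
  · exact hp h
  · exact hq (List.mem_of_mem_tail h)

lemma compOf_eq_of_mem (h : y ∈ compOf G v x) : compOf G v x = compOf G v y :=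
  Set.ext fun _ => ⟨mem_compOf_trans (mem_compOf_symm h), mem_compOf_trans h⟩

lemma mem_compOf_iff_of_adj (huv : G.Adj u v) (hwu : w ≠ u) (hwv : w ≠ v) :
    u ∈ compOf G w y ↔ v ∈ compOf G w y := by
  constructor
  · rintro ⟨p, hp⟩
    exact ⟨p.concat huv, by simp [Walk.support_concat, hp, hwv]⟩
  · rintro ⟨p, hp⟩
    exact ⟨p.concat huv.symm, by simp [Walk.support_concat, hp, hwu]⟩

lemma mem_compOf_of_notMem_compOf (hvz : G.Adj v z) (hwv : w ≠ v) (hl : l ∈ compOf G v z)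
    (hw : w ∉ compOf G v z) : v ∈ compOf G w l := by
  obtain ⟨q, hq⟩ := hl
  have hwq : w ∉ q.support := fun h => hw (mem_compOf_of_mem_support q hq h)
  exact ⟨q.reverse.concat hvz.symm, by simp [Walk.support_concat, hwq, hwv]⟩

lemma mem_compOf_of_mem_support_of_isPath (p : G.Walk u l) (hp : p.IsPath)
    (hw : w ∈ p.support) (hwu : w ≠ u) : w ∈ compOf G u l := by
  cases p with
  | nil => exact absurd (List.mem_singleton.1 hw) hwu
  | @cons _ z _ h r =>
    rw [Walk.cons_isPath_iff] at hp
    have hwr : w ∈ r.support := (List.mem_cons.1 hw).resolve_left hwu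
    exact mem_compOf_trans (mem_compOf_symm ⟨r, hp.2⟩) (mem_compOf_of_mem_support r hp.2 hwr)

lemma exists_adj_compOf_eq (hc : G.Connected) (hxv : x ≠ v) :
    ∃ z, G.Adj v z ∧ compOf G v x = compOf G v z := by
  classical
  obtain ⟨q, hq⟩ := (hc v x).some.toPath
  cases q with
  | nil => exact absurd rfl hxv
  | @cons _ z _ h r =>
    exact ⟨z, h, (compOf_eq_of_mem ⟨r, ((Walk.cons_isPath_iff h r).1 hq).2⟩).symm⟩

lemma eq_of_mem_compOf_of_forall_adj_eq (h : ∀ z, G.Adj v z → z = u)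
    (hw : w ∈ compOf G u v) : w = v := by
  obtain ⟨q, hq⟩ := hw
  cases q with
  | nil => rfl
  | @cons _ z _ hvz r => exact absurd (List.mem_cons_of_mem _ (h z hvz ▸ r.start_mem_support)) hq

lemma isLeaf_of_forall_adj_eq (hvu : G.Adj v u) (h : ∀ z, G.Adj v z → z = u) : IsLeaf G v := by
  have : G.neighborSet v = {u} :=
    Set.ext fun z => ⟨h z, fun hz => hz ▸ hvu⟩
  rw [IsLeaf, this, Set.ncard_singleton]

namespace SimpleGraph.IsAcyclic

variable (hac : G.IsAcyclic)
include hac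

lemma notMem_compOf_of_mem_support {p : G.Walk u l} (hp : p.IsPath) (hw : w ∈ p.support) :
    u ∉ compOf G w l := by
  classical
  rintro ⟨q, hq⟩
  have hpq := (hac.subsingleton_path u l).elim ⟨p, hp⟩ q.reverse.toPath
  have : w ∈ (q.reverse.toPath : G.Walk u l).support := by rw [← hpq]; exact hw
  exact hq (by simpa using q.reverse.support_toPath_subset_support this)

lemma notMem_compOf_of_adj (huv : G.Adj u v) (hvz : G.Adj v z) (hzu : z ≠ u) :
    u ∉ compOf G v z :=
  hac.notMem_compOf_of_mem_support (p := .cons huv (.cons hvz .nil))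
    (by simp [Walk.isPath_def, huv.ne, hvz.ne, hzu.symm]) (by simp)

lemma compOf_subset_of_adj (huv : G.Adj u v) (hvz : G.Adj v z) (hzu : z ≠ u) :
    compOf G v z ⊆ compOf G u v := by
  have hu := hac.notMem_compOf_of_adj huv hvz hzu
  rintro y ⟨q, hq⟩
  have huq : u ∉ q.support := fun h => hu (mem_compOf_of_mem_support q hq h)
  exact ⟨.cons hvz q, by simp [huv.ne, huq]⟩

end SimpleGraph.IsAcyclic

end compOf

section MinBranch

variable {V : Type*} {G : SimpleGraph V} {u v w l : V}

def IsMinBranch (G : SimpleGraph V) (u w l : V) : Prop :=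
  ∀ x, x ≠ w → u ∉ compOf G w x → (compOf G w l).ncard ≤ (compOf G w x).ncard

lemma isMinBranch_self : IsMinBranch G u w w := by
  simp [IsMinBranch, compOf_self]

lemma IsMinBranch.of_forall_adj (hc : G.Connected)
    (h : ∀ y, G.Adj w y → u ∉ compOf G w y → (compOf G w l).ncard ≤ (compOf G w y).ncard) :
    IsMinBranch G u w l := by
  intro x hxw hux
  obtain ⟨y, hwy, hxy⟩ := exists_adj_compOf_eq hc hxw
  rw [hxy] at hux ⊢
  exact h y hwy hux

lemma IsMinBranch.of_mem {z : V} (h : IsMinBranch G u w z) (hl : l ∈ compOf G w z) :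
    IsMinBranch G u w l := by
  rw [IsMinBranch, ← compOf_eq_of_mem hl]
  exact h

lemma IsMinBranch.of_adj (huv : G.Adj u v) (hwu : w ≠ u) (hwv : w ≠ v)
    (h : IsMinBranch G v w l) : IsMinBranch G u w l :=
  fun x hxw hux => h x hxw (mt (mem_compOf_iff_of_adj huv hwu hwv).2 hux)

end MinBranch

theorem SimpleGraph.IsTree.exists_isLeaf_forall_isMinBranch {V : Type*} [Finite V]
    {G : SimpleGraph V} (hT : G.IsTree) {u v : V} (huv : G.Adj u v) :
    ∃ l ∈ compOf G u v, IsLeaf G l ∧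
      ∀ w ∈ compOf G u v, u ∉ compOf G w l → IsMinBranch G u w l := by
  by_cases hleaf : ∀ z, G.Adj v z → z = u
  · refine ⟨v, mem_compOf_self huv.ne', isLeaf_of_forall_adj_eq huv.symm hleaf, fun w hw _ => ?_⟩
    rw [eq_of_mem_compOf_of_forall_adj_eq hleaf hw]
    exact isMinBranch_self
  push Not at hleaf
  obtain ⟨z₀, hvz₀, hz₀u⟩ := hleaf
  obtain ⟨z, ⟨hvz, hzu⟩, hzmin⟩ := Set.exists_min_image {y | G.Adj v y ∧ y ≠ u}
    (fun y => (compOf G v y).ncard) (Set.toFinite _) ⟨z₀, hvz₀, hz₀u⟩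
  have hsub := hT.isAcyclic.compOf_subset_of_adj huv hvz hzu
  have hlt : (compOf G v z).ncard < (compOf G u v).ncard :=
    Set.ncard_lt_ncard (hsub.ssubset_of_ne
      fun h => notMem_compOf_self (h ▸ mem_compOf_self huv.ne'))
  obtain ⟨l, hl, hleafl, hmin⟩ := hT.exists_isLeaf_forall_isMinBranch hvz
  refine ⟨l, hsub hl, hleafl, fun w hw hul => ?_⟩
  by_cases hwv : w = v
  · subst hwv
    refine (IsMinBranch.of_forall_adj hT.connected fun y hwy huy => ?_).of_mem hl
    exact hzmin y ⟨hwy, by rintro rfl; exact huy (mem_compOf_self huv.ne)⟩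
  have hwu : w ≠ u := fun h => notMem_compOf_self (h ▸ hw)
  -- the recursive call is rooted at `v`, which lies in the same branch of `w` as `u`
  have hvl : v ∉ compOf G w l := mt (mem_compOf_iff_of_adj huv hwu hwv).2 hul
  have hwz : w ∈ compOf G v z := by
    by_contra hwz
    exact hvl (mem_compOf_of_notMem_compOf hvz hwv hl hwz)
  exact (hmin w hwz hvl).of_adj huv hwu hwv
termination_by (compOf G u v).ncard

/-- For every finite tree with at least two vertices and every vertex `u`, there is a
special leaf with respect to the tree and `u`. -/
theorem stmt_9 {V : Type*} [Fintype V] (G : SimpleGraph V)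
    (hT : G.IsTree) (h2 : 2 ≤ Fintype.card V) (u : V) :
    ∃ l : V, IsSpecialLeaf G u l := by
  obtain ⟨v, huv, hvmin⟩ : ∃ v, G.Adj u v ∧
      ∀ y ∈ {y | G.Adj u y}, (compOf G u v).ncard ≤ (compOf G u y).ncard := by
    obtain ⟨x, hxu⟩ := Fintype.exists_ne_of_one_lt_card h2 u
    obtain ⟨z, huz, -⟩ := exists_adj_compOf_eq hT.connected hxu
    exact Set.exists_min_image _ _ (Set.toFinite _) ⟨z, huz⟩
  obtain ⟨l, hl, hleaf, hmin⟩ := hT.exists_isLeaf_forall_isMinBranch huv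
  refine ⟨l, fun h => notMem_compOf_self (h ▸ hl), hleaf, fun p hp w hw _ => ?_⟩
  have hul := hT.isAcyclic.notMem_compOf_of_mem_support hp hw
  rcases eq_or_ne w u with rfl | hwu
  · exact (IsMinBranch.of_forall_adj hT.connected fun y hy _ => hvmin y hy).of_mem hl
  · exact hmin w (compOf_eq_of_mem hl ▸ mem_compOf_of_mem_support_of_isPath p hp hw hwu) hul
end
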